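/- arXiv:1810.05179 — 2 statements merged into one kernel-verified Lean document; each statement's English description precedes it below -/
import Mathlib

section
/- Let K be a field of characteristic zero and n ≥ 1 an integer. Let M be the free K-vector space with basis {f_k : k ≥ 0} ∪ {e_k : k ≥ 0}, b : M → M the K-linear map with b(f_k) = 0, b(e_k) = f_{k−n} for k ≥ n and b(e_k) = 0 for k < n, and B : M → M the K-linear map with B(f_k) = 0 and B(e_k) = (k+1) f_{k+1}. For 0 ≤ k ≤ n−1 set c_{k,0} = 1 and c_{k,l} = ∏_{j=0}^{l−1} (k + 1 + j(n+1)) for l ≥ 1, and define the formal power series s_k = Σ_{l≥0} (−1)^l c_{k,l} e_{k+(n+1)l} u^l ∈ M[[u]]. Then (b + uB)(s_k) = 0 in M[[u]], the constant term of s_k is e_k, and s_k is homogeneous of weight (2k+1−n)/(n+1) with respect to the weights wt(f_m) = 2m/(n+1), wt(e_m) = (2m+1−n)/(n+1), wt(u) = −2 (i.e., each coefficient of u^l in s_k is homogeneous in M of weight (2k+1−n)/(n+1) + 2l). -/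
set_option maxHeartbeats 8000000
set_option synthInstance.maxHeartbeats 8000000

noncomputable section

open Finsupp

/-- The reduced Hochschild chain complex of `A_n` as a free vector space:
`Sum.inl k` indexes the even basis vector `f_k = 1|ε^k`,
`Sum.inr k` indexes the odd basis vector `e_k = ε|ε^k`. -/
abbrev MM (K : Type*) [Field K] := (ℕ ⊕ ℕ) →₀ K

/-- The even basis vectors `f_k`. -/
def fv (K : Type*) [Field K] (k : ℕ) : MM K := Finsupp.single (Sum.inl k) 1

/-- The odd basis vectors `e_k`. -/
def ev (K : Type*) [Field K] (k : ℕ) : MM K := Finsupp.single (Sum.inr k) 1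

/-- The Hochschild differential: `b f_k = 0`, `b e_k = f_{k-n}` if `k ≥ n`, else `0`. -/
def bmap (K : Type*) [Field K] (n : ℕ) : MM K →ₗ[K] MM K :=
  Finsupp.linearCombination K
    (Sum.elim (fun _ => (0 : MM K)) (fun k => if n ≤ k then fv K (k - n) else 0))

/-- The Connes cyclic operator: `B f_k = 0`, `B e_k = (k+1) f_{k+1}`. -/
def Bmap (K : Type*) [Field K] : MM K →ₗ[K] MM K :=
  Finsupp.linearCombination K
    (Sum.elim (fun _ => (0 : MM K)) (fun k => ((k : K) + 1) • fv K (k + 1)))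

/-- The coefficients `c_{k,l} = ∏_{j=0}^{l-1} (k + 1 + j(n+1))`, with `c_{k,0} = 1`. -/
def cc (n k l : ℕ) : ℕ := ∏ j ∈ Finset.range l, (k + 1 + j * (n + 1))

/-- The element `s_k = Σ_{l≥0} (−1)^l c_{k,l} e_{k+(n+1)l} u^l ∈ M[[u]]`,
where an element of `M[[u]]` is recorded by its sequence of coefficients. -/
def sElt (K : Type*) [Field K] (n k : ℕ) : ℕ → MM K :=
  fun l => ((-1 : K) ^ l * (cc n k l : K)) • ev K (k + (n + 1) * l)

/-- The operator `b + uB` on `M[[u]]`, acting on sequences of coefficients. -/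
def Dop (K : Type*) [Field K] (n : ℕ) : (ℕ → MM K) → (ℕ → MM K) :=
  fun x l => bmap K n (x l) + (if l = 0 then 0 else Bmap K (x (l - 1)))

/-- The weights of the basis vectors: `wt f_m = 2m/(n+1)`, `wt e_m = (2m+1−n)/(n+1)`. -/
def wtB (n : ℕ) : (ℕ ⊕ ℕ) → ℚ :=
  Sum.elim (fun m => 2 * m / (n + 1)) (fun m => (2 * m + 1 - n) / (n + 1))

/-- An element of `M` is homogeneous of weight `w` if it is supported on
basis vectors of weight `w`. -/
def IsHomog (K : Type*) [Field K] (n : ℕ) (x : MM K) (w : ℚ) : Prop :=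
  ∀ i, x i ≠ 0 → wtB n i = w

/-! `b` lowers the index of `e_m` by `n` and `B` raises it by one with the factor `m + 1`, so in
the coefficient of `u^(l+1)` of `(b + uB) s_k` both `b e_{k+(n+1)(l+1)}` and `B e_{k+(n+1)l}` land on
`f_{k+(n+1)l+1}`; the recursion `c_{k,l+1} = c_{k,l} (k + 1 + l(n+1))` together with the alternating
sign makes them cancel. The constant term `b e_k` vanishes because `k < n`. Each step in `l` adds
`n + 1` to the index, i.e. `2` to the weight. -/

section

variable (K : Type*) [Field K]

lemma bmap_ev (n m : ℕ) :
    bmap K n (ev K m) = if n ≤ m then fv K (m - n) else 0 := by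
  simp [bmap, ev, Finsupp.linearCombination_single]

lemma Bmap_ev (m : ℕ) :
    Bmap K (ev K m) = ((m : K) + 1) • fv K (m + 1) := by
  simp [Bmap, ev, Finsupp.linearCombination_single]

lemma cc_succ (n k l : ℕ) : cc n k (l + 1) = cc n k l * (k + 1 + l * (n + 1)) :=
  Finset.prod_range_succ _ _

lemma sElt_zero (n k : ℕ) : sElt K n k 0 = ev K k := by
  simp [sElt, cc]

lemma bmap_sElt_zero {n k : ℕ} (hk : k < n) :
    bmap K n (sElt K n k 0) = 0 := by
  rw [sElt_zero, bmap_ev, if_neg (by omega)]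

lemma bmap_sElt_succ (n k l : ℕ) :
    bmap K n (sElt K n k (l + 1)) =
      ((-1 : K) ^ (l + 1) * (cc n k (l + 1) : K)) • fv K (k + (n + 1) * l + 1) := by
  have hle : n ≤ k + (n + 1) * (l + 1) := by nlinarith
  have hsub : k + (n + 1) * (l + 1) - n = k + (n + 1) * l + 1 := by
    rw [Nat.mul_succ]; omega
  rw [sElt, map_smul, bmap_ev, if_pos hle, hsub]

lemma Bmap_sElt (n k l : ℕ) :
    Bmap K (sElt K n k l) =
      ((-1 : K) ^ l * (cc n k l : K) * ((k + (n + 1) * l : ℕ) + 1)) •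
        fv K (k + (n + 1) * l + 1) := by
  rw [sElt, map_smul, Bmap_ev, smul_smul]

lemma Dop_sElt_eq_zero {n k : ℕ} (hk : k < n) : Dop K n (sElt K n k) = 0 := by
  funext l
  cases l with
  | zero => simp [Dop, bmap_sElt_zero K hk]
  | succ l =>
    rw [Dop, if_neg l.succ_ne_zero, Nat.add_sub_cancel, bmap_sElt_succ, Bmap_sElt, ← add_smul,
      cc_succ, Pi.zero_apply]
    convert zero_smul K (fv K (k + (n + 1) * l + 1))
    push_cast
    ring

lemma isHomog_smul_ev (n : ℕ) (a : K) (m : ℕ) :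
    IsHomog K n (a • ev K m) (wtB n (Sum.inr m)) := by
  intro i hi
  obtain rfl : Sum.inr m = i := by
    by_contra hne
    simp [ev, hne] at hi
  rfl

lemma wtB_inr_add_mul (n k l : ℕ) :
    wtB n (Sum.inr (k + (n + 1) * l)) = (2 * k + 1 - n) / (n + 1) + 2 * l := by
  simp only [wtB, Sum.elim_inr]
  field_simp
  push_cast
  ring

end

theorem stmt2_general (K : Type*) [Field K] (n : ℕ) (hn : 1 ≤ n)
    (k : ℕ) (hk : k ≤ n - 1) :
    -- (b + uB)(s_k) = 0 in M[[u]]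
    Dop K n (sElt K n k) = 0 ∧
    -- the constant term of s_k is e_k
    sElt K n k 0 = ev K k ∧
    -- s_k is homogeneous of weight (2k+1−n)/(n+1) with wt(u) = −2: the coefficient
    -- of u^l is homogeneous in M of weight (2k+1−n)/(n+1) + 2l
    (∀ l : ℕ, IsHomog K n (sElt K n k l) ((2 * k + 1 - n) / (n + 1) + 2 * l)) := by
  refine ⟨Dop_sElt_eq_zero K (by omega), sElt_zero K n k, fun l => ?_⟩
  rw [← wtB_inr_add_mul]
  exact isHomog_smul_ev K n _ _

theorem stmt2 (K : Type*) [Field K] [CharZero K] (n : ℕ) (hn : 1 ≤ n)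
    (k : ℕ) (hk : k ≤ n - 1) :
    -- (b + uB)(s_k) = 0 in M[[u]]
    Dop K n (sElt K n k) = 0 ∧
    -- the constant term of s_k is e_k
    sElt K n k 0 = ev K k ∧
    -- s_k is homogeneous of weight (2k+1−n)/(n+1) with wt(u) = −2: the coefficient
    -- of u^l is homogeneous in M of weight (2k+1−n)/(n+1) + 2l
    (∀ l : ℕ, IsHomog K n (sElt K n k l) ((2 * k + 1 - n) / (n + 1) + 2 * l)) :=
  stmt2_general K n hn k hk
end
end

section
/- Let K be a field of characteristic zero and n ≥ 1 an integer. Let M be the free K-vector space with basis {f_k : k ≥ 0} ∪ {e_k : k ≥ 0}. Let β : M × M → K be the bilinear form with β(e_i, e_j) = 1 if i + j = n − 1 and all other pairings of basis vectors equal to 0, and extend it to the higher residue pairing ⟨·,·⟩ : M[[u]] × M[[u]] → K[[u]] determined by ⟨α u^p, γ u^q⟩ = (−1)^p β(α, γ) u^{p+q} for α, γ ∈ M. For 0 ≤ k ≤ n−1 let s_k = Σ_{l≥0} (−1)^l c_{k,l} e_{k+(n+1)l} u^l ∈ M[[u]], where c_{k,0} = 1 and c_{k,l} = ∏_{j=0}^{l−1}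 (k + 1 + j(n+1)). Then for all 0 ≤ i, j ≤ n−1 one has ⟨s_i, s_j⟩ = 1 if i + j = n − 1 and ⟨s_i, s_j⟩ = 0 otherwise; in particular ⟨s_i, s_j⟩ is a constant in K ⊂ K[[u]], i.e., all coefficients of positive powers of u vanish. -/
set_option maxHeartbeats 8000000
set_option synthInstance.maxHeartbeats 8000000

noncomputable section

open Finsupp

/-- Values of the Mukai pairing on basis vectors: `β(e_i, e_j) = 1` if `i + j = n - 1`,
all other pairings of basis vectors vanish. -/
def pairVal (K : Type*) [Field K] (n : ℕ) : (ℕ ⊕ ℕ) → (ℕ ⊕ ℕ) → K := fun i j =>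
  match i, j with
  | Sum.inr a, Sum.inr c => if a + c = n - 1 then 1 else 0
  | _, _ => 0

/-- The chain-level Mukai pairing, as a bilinear map. -/
def betaMap (K : Type*) [Field K] (n : ℕ) : MM K →ₗ[K] MM K →ₗ[K] K :=
  Finsupp.linearCombination K
    (fun i => Finsupp.linearCombination K (fun j => pairVal K n i j))

/-- The higher residue pairing `M[[u]] × M[[u]] → K[[u]]` determined by
`⟨α u^p, γ u^q⟩ = (−1)^p β(α, γ) u^{p+q}`: its `m`-th coefficient is
`Σ_{p+q=m} (−1)^p β(x_p, y_q)`. -/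
def hres (K : Type*) [Field K] (n : ℕ) (x y : ℕ → MM K) : PowerSeries K :=
  PowerSeries.mk fun m =>
    ∑ p ∈ Finset.range (m + 1), (-1 : K) ^ p * betaMap K n (x p) (y (m - p))

lemma beta_ev (K : Type*) [Field K] (n a c : ℕ) :
    betaMap K n (ev K a) (ev K c) = if a + c = n - 1 then 1 else 0 := by
  simp [betaMap, ev, Finsupp.linearCombination_single, pairVal]

theorem stmt4 (K : Type*) [Field K] [CharZero K] (n : ℕ) (hn : 1 ≤ n)
    (i j : ℕ) (hi : i ≤ n - 1) (hj : j ≤ n - 1) :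
    -- ⟨s_i, s_j⟩ = 1 if i + j = n − 1 and 0 otherwise, as constants in K ⊂ K[[u]];
    -- in particular all coefficients of positive powers of u vanish
    hres K n (sElt K n i) (sElt K n j)
      = if i + j = n - 1 then (1 : PowerSeries K) else 0 := by
  have key : ∀ m p : ℕ, p ≤ m →
      (betaMap K n (sElt K n i p)) (sElt K n j (m - p))
        = ((-1:K)^p * cc n i p) * ((-1:K)^(m-p) * cc n j (m-p)) *
          (if i + j + (n+1)*m = n - 1 then 1 else 0) := by
    intro m p hp
    simp only [sElt, map_smul, LinearMap.smul_apply, smul_eq_mul, beta_ev]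
    have h1 : (n+1)*p + (n+1)*(m-p) = (n+1)*m := by
      rw [← Nat.mul_add]; congr 1; omega
    have h2 : i + (n+1)*p + (j + (n+1)*(m-p)) = i + j + (n+1)*m := by omega
    rw [h2]; ring
  apply PowerSeries.ext
  intro m
  rw [hres, PowerSeries.coeff_mk]
  rcases Nat.eq_zero_or_pos m with hm | hm
  · subst hm
    rw [Finset.sum_range_one]
    rw [key 0 0 le_rfl]
    simp only [Nat.sub_zero, pow_zero, cc, Finset.range_zero, Finset.prod_empty,
      Nat.cast_one, mul_one, one_mul, Nat.mul_zero, Nat.add_zero, mul_zero, add_zero]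
    split_ifs <;> simp [PowerSeries.coeff_zero_one]
  · have hz : ∀ p ∈ Finset.range (m+1),
        (-1:K)^p * (betaMap K n (sElt K n i p)) (sElt K n j (m - p)) = 0 := by
      intro p hp
      rw [key m p (by simpa using Nat.lt_succ_iff.mp (Finset.mem_range.mp hp))]
      have : ¬ (i + j + (n+1)*m = n - 1) := by
        have : (n+1)*m ≥ n+1 := Nat.le_mul_of_pos_right _ hm
        omega
      rw [if_neg this]; ring
    rw [Finset.sum_eq_zero hz]
    split_ifs <;> simp [PowerSeries.coeff_one, Nat.pos_iff_ne_zero.mp hm]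
end
end
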